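/- arXiv:1910.07292 — 2 statements merged into one kernel-verified Lean document; each statement's English description precedes it below -/
import Mathlib

section
/- Every infinite path P = {Γ₁, Γ₂, …} in covtree starting at the root has a certificate: there exists an infinite (countable, past-finite) order C such that for every n, the set of n-stems of C equals Γₙ. -/
/-- A finite labeled order: a partial order structure on `Fin n`. -/
abbrev FinOrd (n : ℕ) := PartialOrder (Fin n)

/-- Isomorphism of two orders on `Fin n`. -/
def OrdIso {n : ℕ} (p q : FinOrd n) : Prop :=
  Nonempty (p.le ≃r q.le)

instance ordSetoid (n : ℕ) : Setoid (FinOrd n) where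
  r := OrdIso
  iseqv := by
    refine ⟨fun p => ⟨RelIso.refl _⟩, ?_, ?_⟩
    · rintro p q ⟨e⟩; exact ⟨e.symm⟩
    · rintro p q r ⟨e⟩ ⟨f⟩; exact ⟨e.trans f⟩

/-- An `n`-order: an isomorphism class of partial orders of cardinality `n`. -/
def NOrder (n : ℕ) := Quotient (ordSetoid n)

/-- `B` (a partial order on `Fin n`) occurs as a stem (finite downward-closed
subcauset) in the partial order `p` on `α`. -/
def StemIn {n : ℕ} {α : Type*} (B : FinOrd n) (p : PartialOrder α) : Prop :=
  ∃ f : Fin n → α, Function.Injective f ∧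
    (∀ i j : Fin n, B.le i j ↔ p.le (f i) (f j)) ∧
    (∀ (i : Fin n) (y : α), p.lt y (f i) → ∃ j : Fin n, f j = y)

/-- The `n`-order `B` is a stem in the order `p`. -/
def QStemIn {n : ℕ} {α : Type*} (B : NOrder n) (p : PartialOrder α) : Prop :=
  ∃ b : FinOrd n, ⟦b⟧ = B ∧ StemIn b p

/-- The set of `k`-stems of `p`, as a set of `k`-orders. -/
def stems (k : ℕ) {α : Type*} (p : PartialOrder α) : Set (NOrder k) :=
  {B | QStemIn B p}

/-- Stem relation between unlabeled finite orders: `S` is a stem in `T`. -/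
def NStemIn {n m : ℕ} (S : NOrder n) (T : NOrder m) : Prop :=
  ∃ t : FinOrd m, ⟦t⟧ = T ∧ QStemIn S t

/-- An order is past-finite if every element has finitely many elements below it. -/
def PastFinite {α : Type*} (p : PartialOrder α) : Prop :=
  ∀ x : α, {y : α | p.lt y x}.Finite

/-- The operation sending a set of `n`-orders to the set of `(n-1)`-stems of its
elements. -/
def Ominus (n : ℕ) (Γ : Set (NOrder n)) : Set (NOrder (n - 1)) :=
  {B | ∃ A ∈ Γ, NStemIn B A}

/-- The `j`-fold iterate of `Ominus`. -/
def OminusIter : (j : ℕ) → (n : ℕ) → Set (NOrder n) → Set (NOrder (n - j))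
  | 0, _, Γ => Γ
  | j + 1, n, Γ => Ominus (n - j) (OminusIter j n Γ)

/-- `Γ` is a node of covtree at level `n`: it is nonempty and has a certificate,
i.e. a (finite or countably infinite) past-finite order whose set of `n`-stems
is exactly `Γ`. -/
def IsNode (n : ℕ) (Γ : Set (NOrder n)) : Prop :=
  Γ.Nonempty ∧ ∃ (α : Type) (p : PartialOrder α), Countable α ∧ PastFinite p ∧
    stems n p = Γ


/-- An infinite path in covtree, starting at the root: for each `n` a node of
covtree at level `n` (a nonempty set of `n`-orders admitting a certificate),
each node being directly below the next via the `O₋` operation.  (Level `0`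
carries the trivial node consisting of the empty order.) -/
structure CovPath where
  node : (n : ℕ) → Set (NOrder n)
  nonempty : ∀ n, (node n).Nonempty
  isNode : ∀ n, IsNode n (node n)
  link : ∀ n, Ominus (n + 1) (node (n + 1)) = node n

/-! A König-type argument. Every certificate of `Γₘ` is also a certificate of all the lower
nodes `Γₖ`, since `O₋` computes the `k`-stems of a past-finite order from its `(k+1)`-stems.
Fix certificates `Cₘ` of the nodes and enumerate all members of all nodes. We build an
increasing chain of finite orders `A₀ ⊆ A₁ ⊆ ⋯`, each a stem of the next and each a stem of
infinitely many `Cₘ`, such that `Aₘ₊₁` contains the `m`-th enumerated order as a stem: inside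
any large enough `Cₘ` containing `Aₘ` the union of `Aₘ` with a copy of that order is a finite
downset, and as there are only finitely many orders of a given size, one of the resulting
extensions occurs in infinitely many `Cₘ`. The union of the chain is the required certificate.
-/

open Function Set

instance (n : ℕ) : Finite (FinOrd n) :=
  Finite.of_injective (fun q : FinOrd n => q.le) fun _ _ h =>
    PartialOrder.ext fun a b => Iff.of_eq (congrFun₂ h a b)

instance (n : ℕ) : Finite (NOrder n) :=
  Quotient.finite _

section StemEmbedding

variable {k n : ℕ} {α : Type*}

def IsStemEmbedding (B : FinOrd k) (p : PartialOrder α) (f : Fin k → α) : Prop :=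
  Injective f ∧ (∀ i j, B.le i j ↔ p.le (f i) (f j)) ∧ ∀ i y, p.lt y (f i) → ∃ j, f j = y

theorem stemIn_iff {B : FinOrd k} {p : PartialOrder α} :
    StemIn B p ↔ ∃ f, IsStemEmbedding B p f :=
  Iff.rfl

theorem isStemEmbedding_relIso {B B' : FinOrd n} (e : B.le ≃r B'.le) :
    IsStemEmbedding B B' e :=
  ⟨e.injective, fun _ _ => e.map_rel_iff.symm, fun _ y _ => ⟨e.symm y, e.apply_symm_apply y⟩⟩

theorem isStemEmbedding_lift [p : PartialOrder α] {ι : Fin n → α} (hι : Injective ι)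
    (hlow : IsLowerSet (range ι)) : IsStemEmbedding (PartialOrder.lift ι hι) p ι :=
  ⟨hι, fun _ _ => Iff.rfl, fun i _ hy => hlow hy.le (mem_range_self i)⟩

theorem IsStemEmbedding.isLowerSet_range [p : PartialOrder α] {B : FinOrd k} {f : Fin k → α}
    (h : IsStemEmbedding B p f) : IsLowerSet (range f) := by
  rintro x y hyx ⟨i, rfl⟩
  obtain rfl | hlt := hyx.eq_or_lt
  · exact mem_range_self i
  · exact h.2.2 i y hlt

namespace IsStemEmbedding

variable {B : FinOrd k} {A : FinOrd n} {p : PartialOrder α} {f : Fin k → α}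

theorem lt_iff (h : IsStemEmbedding B p f) (i j : Fin k) : B.lt i j ↔ p.lt (f i) (f j) := by
  rw [B.lt_iff_le_not_ge, p.lt_iff_le_not_ge, h.2.1, h.2.1]

theorem comp {g : Fin k → Fin n} {ι : Fin n → α} (hg : IsStemEmbedding B A g)
    (hι : IsStemEmbedding A p ι) : IsStemEmbedding B p (ι ∘ g) := by
  refine ⟨hι.1.comp hg.1, fun i j => (hg.2.1 i j).trans (hι.2.1 _ _), fun i y hy => ?_⟩
  obtain ⟨j, rfl⟩ := hι.2.2 _ y hy
  obtain ⟨l, rfl⟩ := hg.2.2 i j ((hι.lt_iff _ _).mpr hy)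
  exact ⟨l, rfl⟩

theorem of_comp {g : Fin k → Fin n} {ι : Fin n → α} (hι : IsStemEmbedding A p ι)
    (h : IsStemEmbedding B p (ι ∘ g)) : IsStemEmbedding B A g := by
  refine ⟨h.1.of_comp, fun i j => (h.2.1 i j).trans (hι.2.1 _ _).symm, fun i z hz => ?_⟩
  obtain ⟨l, hl⟩ := h.2.2 i (ι z) ((hι.lt_iff _ _).mp hz)
  exact ⟨l, hι.1 hl⟩

theorem stemIn_of_range_subset {ι : Fin n → α} (hι : IsStemEmbedding A p ι)
    (hf : IsStemEmbedding B p f) (hsub : range f ⊆ range ι) : StemIn B A := by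
  choose g hg using fun i => hsub (mem_range_self i)
  have hgf : ι ∘ g = f := funext hg
  exact ⟨g, hι.of_comp (hgf ▸ hf)⟩

end IsStemEmbedding

theorem qStemIn_mk {B : FinOrd k} {p : PartialOrder α} : QStemIn ⟦B⟧ p ↔ StemIn B p := by
  refine ⟨fun ⟨B', hB', f, hf⟩ => ?_, fun h => ⟨B, rfl, h⟩⟩
  obtain ⟨e⟩ := Quotient.exact hB'
  exact ⟨_, (isStemEmbedding_relIso e.symm).comp hf⟩

theorem QStemIn.of_nStemIn {S : NOrder k} {T : NOrder n} {p : PartialOrder α}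
    (hST : NStemIn S T) (hT : QStemIn T p) : QStemIn S p := by
  obtain ⟨t, rfl, s, rfl, hs⟩ := hST
  obtain ⟨g, hg⟩ := stemIn_iff.mp hs
  obtain ⟨f, hf⟩ := stemIn_iff.mp (qStemIn_mk.mp hT)
  exact ⟨s, rfl, _, hg.comp hf⟩

theorem nonempty_embedding_of_mem_stems {p : PartialOrder α} {B : NOrder n}
    (hB : B ∈ stems n p) : Nonempty (Fin n ↪ α) :=
  let ⟨_, _, f, hf⟩ := hB
  ⟨⟨f, hf.1⟩⟩

end StemEmbedding

theorem exists_injective_range_eq_extending {α : Type*} {D : Set α} {k N : ℕ} (hD : D.Finite)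
    (hDN : D.ncard = N) (hkN : k ≤ N) {f : Fin k → α} (hf : Injective f) (hfD : range f ⊆ D) :
    ∃ ι : Fin N → α, Injective ι ∧ range ι = D ∧ ι ∘ Fin.castLE hkN = f := by
  obtain ⟨d, hd⟩ := Nat.exists_eq_add_of_le hkN
  induction d generalizing k with
  | zero =>
    subst hd
    refine ⟨f, hf, eq_of_subset_of_ncard_le hfD ?_ hD, rfl⟩
    rw [hDN, ncard_range_of_injective hf, Nat.card_fin]
  | succ d ih =>
    obtain ⟨z, hzD, hzf⟩ : ∃ z ∈ D, z ∉ range f := by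
      by_contra! h
      have := ncard_le_ncard h (finite_range f)
      rw [hDN, ncard_range_of_injective hf, Nat.card_fin] at this
      omega
    obtain ⟨ι, hι, hιD, hιf⟩ := ih (f := Fin.snoc f z) (by omega)
      (Fin.snoc_injective_iff.mpr ⟨hf, hzf⟩) (by rw [Fin.range_snoc]; exact insert_subset hzD hfD)
      (by omega)
    exact ⟨ι, hι, hιD, by rw [← Fin.snoc_comp_castSucc (a := z) (f := f), ← hιf]; rfl⟩

namespace PastFinite

variable {α : Type*} [p : PartialOrder α]

theorem exists_minimal_not_mem (hp : PastFinite p) {E : Set α} {x : α} (hx : x ∉ E) :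
    ∃ z ∉ E, Iio z ⊆ E := by
  have hF : (Iic x \ E).Finite := (Iio_insert (a := x) ▸ (hp x).insert x).sdiff
  obtain ⟨z, hz⟩ := hF.exists_minimal ⟨x, self_mem_Iic, hx⟩
  refine ⟨z, hz.prop.2, fun y hy => by_contra fun hyE => hz.not_prop_of_lt hy ?_⟩
  exact ⟨hy.le.trans hz.prop.1, hyE⟩

theorem exists_isLowerSet_superset_ncard_eq (hp : PastFinite p) {N : ℕ} (g : Fin N ↪ α)
    {E : Set α} (hE : E.Finite) (hlow : IsLowerSet E) (hN : E.ncard ≤ N) :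
    ∃ D, E ⊆ D ∧ D.Finite ∧ IsLowerSet D ∧ D.ncard = N := by
  obtain ⟨d, hd⟩ := Nat.exists_eq_add_of_le hN
  induction d generalizing E with
  | zero => exact ⟨E, subset_rfl, hE, hlow, hd.symm⟩
  | succ d ih =>
    obtain ⟨x, hx⟩ : ∃ x, x ∉ E := by
      by_contra! h
      have := ncard_le_ncard (fun x _ => h x : range g ⊆ E) hE
      rw [ncard_range_of_injective g.injective, Nat.card_fin] at this
      omega
    obtain ⟨z, hzE, hzmin⟩ := hp.exists_minimal_not_mem hx
    have hlow' : IsLowerSet (insert z E) := by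
      rintro a b hba (rfl | ha)
      · obtain rfl | hlt := hba.eq_or_lt
        exacts [mem_insert _ _, mem_insert_of_mem _ (hzmin hlt)]
      · exact mem_insert_of_mem _ (hlow hba ha)
    have hcard := ncard_insert_of_notMem hzE hE
    obtain ⟨D, hED, hD⟩ := ih (hE.insert z) hlow' (by omega) (by omega)
    exact ⟨D, (subset_insert z E).trans hED, hD⟩

theorem exists_stem_extending (hp : PastFinite p) {k N : ℕ} (g : Fin N ↪ α) (hkN : k ≤ N)
    {A : FinOrd k} {f : Fin k → α} (hf : IsStemEmbedding A p f) {E : Set α} (hE : E.Finite)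
    (hlow : IsLowerSet E) (hfE : range f ⊆ E) (hEN : E.ncard ≤ N) :
    ∃ (q : FinOrd N) (ι : Fin N → α), IsStemEmbedding q p ι ∧ E ⊆ range ι ∧
      IsStemEmbedding A q (Fin.castLE hkN) := by
  obtain ⟨D, hED, hD, hDlow, hDN⟩ := hp.exists_isLowerSet_superset_ncard_eq g hE hlow hEN
  obtain ⟨ι, hι, hιD, hιf⟩ :=
    exists_injective_range_eq_extending hD hDN hkN hf.1 (hfE.trans hED)
  have hq := isStemEmbedding_lift hι (hιD ▸ hDlow)
  exact ⟨_, ι, hq, hιD ▸ hED, hq.of_comp (hιf ▸ hf)⟩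

theorem exists_common_extension (hp : PastFinite p) {s t N : ℕ} (g : Fin N ↪ α)
    (hN : s + t ≤ N) {A : FinOrd s} {T : FinOrd t} (hA : StemIn A p) (hT : StemIn T p) :
    ∃ q : FinOrd N, StemIn q p ∧ IsStemEmbedding A q (Fin.castLE (Nat.le_of_add_right_le hN)) ∧
      StemIn T q := by
  obtain ⟨fA, hfA⟩ := stemIn_iff.mp hA
  obtain ⟨fT, hfT⟩ := stemIn_iff.mp hT
  have hcard : (range fA ∪ range fT).ncard ≤ N := by
    refine (ncard_union_le _ _).trans ?_
    rwa [ncard_range_of_injective hfA.1, ncard_range_of_injective hfT.1, Nat.card_fin,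
      Nat.card_fin]
  obtain ⟨q, ι, hι, hEι, hAq⟩ := hp.exists_stem_extending g _ hfA
    ((finite_range fA).union (finite_range fT)) (hfA.isLowerSet_range.union hfT.isLowerSet_range)
    subset_union_left hcard
  exact ⟨q, ⟨ι, hι⟩, hAq, hι.stemIn_of_range_subset hfT (subset_union_right.trans hEι)⟩

theorem ominus_stems (hp : PastFinite p) {k : ℕ} (g : Fin (k + 1) ↪ α) :
    Ominus (k + 1) (stems (k + 1) p) = stems k p := by
  ext B
  refine ⟨fun ⟨A, hA, hBA⟩ => QStemIn.of_nStemIn hBA hA, ?_⟩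
  rintro ⟨b, rfl, hb⟩
  obtain ⟨f, hf⟩ := stemIn_iff.mp hb
  obtain ⟨q, ι, hι, -, hbq⟩ := hp.exists_stem_extending g k.le_succ hf (finite_range f)
    hf.isLowerSet_range subset_rfl (by rw [ncard_range_of_injective hf.1, Nat.card_fin]; omega)
  exact ⟨⟦q⟧, ⟨q, rfl, ι, hι⟩, q, rfl, b, rfl, _, hbq⟩

end PastFinite

theorem CovPath.stems_eq_node_of_le (P : CovPath) {α : Type*} {p : PartialOrder α}
    (hp : PastFinite p) {m : ℕ} (hm : stems m p = P.node m) {k : ℕ} (hk : k ≤ m) :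
    stems k p = P.node k := by
  obtain ⟨B, hB⟩ := P.nonempty m
  obtain ⟨g⟩ := nonempty_embedding_of_mem_stems (hm.symm ▸ hB)
  induction hk using Nat.decreasingInduction with
  | self => exact hm
  | of_succ k hkm ih =>
    rw [← hp.ominus_stems ((Fin.castLEEmb hkm).trans g), ih]
    exact P.link k

namespace StemChain

variable (s : ℕ → ℕ) (A : ∀ m, FinOrd (s m)) (hs : ∀ m, s m < s (m + 1))
  (hA : ∀ m, IsStemEmbedding (A m) (A (m + 1)) (Fin.castLE (hs m).le))

include hs in
theorem lt_size_succ {a M : ℕ} (h : a ≤ M) : a < s (M + 1) :=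
  (Nat.lt_succ_of_le h).trans_le ((strictMono_nat_of_lt_succ hs).id_le _)

include hA in
theorem isStemEmbedding_castLE {M M' : ℕ} (h : M ≤ M') :
    IsStemEmbedding (A M) (A M') (Fin.castLE ((strictMono_nat_of_lt_succ hs).monotone h)) := by
  induction M', h using Nat.le_induction with
  | base => exact isStemEmbedding_relIso (RelIso.refl _)
  | succ M' _ ih => exact ih.comp (hA M')

include hA in
theorem le_congr {M M' a b : ℕ} (ha : a < s M) (hb : b < s M) (ha' : a < s M')
    (hb' : b < s M') : (A M).le ⟨a, ha⟩ ⟨b, hb⟩ ↔ (A M').le ⟨a, ha'⟩ ⟨b, hb'⟩ := by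
  rw [(isStemEmbedding_castLE s A hs hA (le_max_left M M')).2.1 ⟨a, ha⟩ ⟨b, hb⟩,
    (isStemEmbedding_castLE s A hs hA (le_max_right M M')).2.1 ⟨a, ha'⟩ ⟨b, hb'⟩]
  rfl

def ColimLE (a b : ℕ) : Prop :=
  (A (max a b + 1)).le ⟨a, lt_size_succ s hs (le_max_left a b)⟩
    ⟨b, lt_size_succ s hs (le_max_right a b)⟩

include hA in
theorem colimLE_iff {M a b : ℕ} (ha : a < s M) (hb : b < s M) :
    ColimLE s A hs a b ↔ (A M).le ⟨a, ha⟩ ⟨b, hb⟩ :=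
  le_congr s A hs hA _ _ ha hb

include hA in
/-- The union of the chain, realized on `ℕ`: `A M` lives on the initial segment `[0, s M)`. -/
abbrev colim : PartialOrder ℕ where
  le := ColimLE s A hs
  lt a b := ColimLE s A hs a b ∧ ¬ColimLE s A hs b a
  lt_iff_le_not_ge _ _ := Iff.rfl
  le_refl a := (A _).le_refl _
  le_trans a b c hab hbc := by
    have h : ∀ {x}, x ≤ max a (max b c) → x < s (max a (max b c) + 1) := lt_size_succ s hs
    rw [colimLE_iff s A hs hA (h (le_max_left _ _)) (h (by omega))] at hab
    rw [colimLE_iff s A hs hA (h (by omega)) (h (by omega))] at hbc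
    exact (colimLE_iff s A hs hA _ _).mpr ((A _).le_trans _ _ _ hab hbc)
  le_antisymm a b hab hba := by
    have h : ∀ {x}, x ≤ max a b → x < s (max a b + 1) := lt_size_succ s hs
    rw [colimLE_iff s A hs hA (h (le_max_right _ _)) (h (le_max_left _ _))] at hba
    exact congrArg Fin.val ((A _).le_antisymm _ _ hab hba)

theorem isStemEmbedding_colim (M : ℕ) : IsStemEmbedding (A M) (colim s A hs hA) Fin.val := by
  refine ⟨Fin.val_injective, fun i j => (colimLE_iff s A hs hA i.2 j.2).symm, fun i y hy => ?_⟩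
  have hle := (strictMono_nat_of_lt_succ hs).monotone (le_max_left M y).step
  have hy' := lt_size_succ s hs (le_max_right M y)
  have hlt : (A (max M y + 1)).lt ⟨y, hy'⟩ (Fin.castLE hle i) := by
    obtain ⟨hyi, hiy⟩ := hy
    rw [colimLE_iff s A hs hA hy' (i.2.trans_le hle)] at hyi
    rw [colimLE_iff s A hs hA (i.2.trans_le hle) hy'] at hiy
    exact ((A _).lt_iff_le_not_ge _ _).mpr ⟨hyi, hiy⟩
  obtain ⟨j, hj⟩ := (isStemEmbedding_castLE s A hs hA (le_max_left M y).step).2.2 i _ hlt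
  exact ⟨j, congrArg Fin.val hj⟩

theorem pastFinite_colim : PastFinite (colim s A hs hA) := fun x =>
  (finite_range Fin.val).subset fun y hy =>
    (StemChain.isStemEmbedding_colim s A hs hA (x + 1)).2.2 ⟨x, lt_size_succ s hs le_rfl⟩ y hy

end StemChain

section Certificates

variable {α : ℕ → Type} (p : ∀ m, PartialOrder (α m))

def IsFrequentStem {s : ℕ} (A : FinOrd s) : Prop :=
  {m | StemIn A (p m)}.Infinite

variable {P : CovPath} {p} (hp : ∀ m, PastFinite (p m)) (hcert : ∀ m, stems m (p m) = P.node m)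
include hp hcert

theorem IsFrequentStem.exists_extension {s k : ℕ} {A : FinOrd s} (hA : IsFrequentStem p A)
    {T : NOrder k} (hT : T ∈ P.node k) :
    ∃ A' : FinOrd (s + k + 1), IsFrequentStem p A' ∧
      IsStemEmbedding A A' (Fin.castLE (by omega)) ∧ QStemIn T A' := by
  set N := s + k + 1
  let Good (q : FinOrd N) : Prop := IsStemEmbedding A q (Fin.castLE (by omega)) ∧ QStemIn T q
  have hcover : {m | StemIn A (p m)} \ Iio N ⊆ ⋃ q : FinOrd N, {m | StemIn q (p m) ∧ Good q} := by
    rintro m ⟨hAm, hmN⟩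
    have hNm : N ≤ m := not_lt.mp hmN
    have hTm : T ∈ stems k (p m) := by
      rw [P.stems_eq_node_of_le (hp m) (hcert m) (by omega : k ≤ m)]
      exact hT
    obtain ⟨t, rfl, htm⟩ := hTm
    obtain ⟨B, hB⟩ := P.nonempty m
    obtain ⟨g⟩ := nonempty_embedding_of_mem_stems ((hcert m).symm ▸ hB)
    obtain ⟨q, hqm, hAq, htq⟩ :=
      (hp m).exists_common_extension ((Fin.castLEEmb hNm).trans g) (by omega) hAm htm
    exact mem_iUnion.mpr ⟨q, hqm, hAq, t, rfl, htq⟩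
  obtain ⟨q, hq⟩ : ∃ q : FinOrd N, {m | StemIn q (p m) ∧ Good q}.Infinite := by
    by_contra! h
    exact (hA.sdiff (finite_Iio N)) ((finite_iUnion h).subset hcover)
  obtain ⟨m, -, hGood⟩ := hq.nonempty
  exact ⟨q, hq.mono fun _ hm => hm.1, hGood⟩

theorem exists_frequent_chain :
    ∃ (s : ℕ → ℕ) (A : ∀ m, FinOrd (s m)) (hs : ∀ m, s m < s (m + 1)),
      (∀ m, IsStemEmbedding (A m) (A (m + 1)) (Fin.castLE (hs m).le)) ∧
      (∀ m, IsFrequentStem p (A m)) ∧ ∀ n, ∀ B ∈ P.node n, ∃ m, QStemIn B (A m) := by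
  have : Nonempty (Σ n, P.node n) := ⟨⟨0, (P.nonempty 0).some, (P.nonempty 0).some_mem⟩⟩
  obtain ⟨τ, hτ⟩ := exists_surjective_nat (Σ n, P.node n)
  have hstep (x : Σ s, {A : FinOrd s // IsFrequentStem p A}) (m : ℕ) :
      ∃ y : Σ s, {A : FinOrd s // IsFrequentStem p A}, ∃ h : x.1 < y.1,
        IsStemEmbedding x.2.1 y.2.1 (Fin.castLE h.le) ∧ QStemIn (τ m).2.1 y.2.1 := by
    obtain ⟨A', hA', hAA', hτA'⟩ := x.2.2.exists_extension hp hcert (τ m).2.2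
    exact ⟨⟨_, A', hA'⟩, Nat.lt_succ_of_le (Nat.le_add_right _ _), hAA', hτA'⟩
  choose next hnext using hstep
  have hempty : IsFrequentStem p (inferInstance : FinOrd 0) := by
    refine infinite_univ.mono fun m _ => ⟨Fin.elim0, ?_⟩
    exact ⟨fun i => i.elim0, fun i => i.elim0, fun i => i.elim0⟩
  let chain (m : ℕ) : Σ s, {A : FinOrd s // IsFrequentStem p A} :=
    Nat.rec ⟨0, inferInstance, hempty⟩ (fun m x => next x m) m
  refine ⟨fun m => (chain m).1, fun m => (chain m).2.1, fun m => (hnext (chain m) m).1,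
    fun m => (hnext (chain m) m).2.1, fun m => (chain m).2.2, fun n B hB => ?_⟩
  obtain ⟨m, hm⟩ := hτ ⟨n, B, hB⟩
  have hBm := (hnext (chain m) m).2.2
  rw [hm] at hBm
  exact ⟨m + 1, hBm⟩

theorem stems_colim_eq_node {s : ℕ → ℕ} {A : ∀ m, FinOrd (s m)} {hs : ∀ m, s m < s (m + 1)}
    (hA : ∀ m, IsStemEmbedding (A m) (A (m + 1)) (Fin.castLE (hs m).le))
    (hfreq : ∀ m, IsFrequentStem p (A m)) (hexh : ∀ n, ∀ B ∈ P.node n, ∃ m, QStemIn B (A m))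
    (n : ℕ) : stems n (StemChain.colim s A hs hA) = P.node n := by
  ext B
  constructor
  · rintro ⟨b, rfl, hb⟩
    obtain ⟨f, hf⟩ := stemIn_iff.mp hb
    set M := Finset.univ.sup f + 1
    have hfM (i : Fin n) : f i < s M :=
      StemChain.lt_size_succ s hs (Finset.le_sup (Finset.mem_univ i))
    have hbM : IsStemEmbedding b (A M) fun i => ⟨f i, hfM i⟩ :=
      (StemChain.isStemEmbedding_colim s A hs hA M).of_comp hf
    obtain ⟨m, ⟨g, hg⟩, hnm⟩ := (hfreq M).exists_gt n
    rw [← P.stems_eq_node_of_le (hp m) (hcert m) hnm.le]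
    exact ⟨b, rfl, _, hbM.comp hg⟩
  · intro hB
    obtain ⟨m, b, rfl, hb⟩ := hexh n B hB
    obtain ⟨f, hf⟩ := stemIn_iff.mp hb
    exact ⟨b, rfl, _, hf.comp (StemChain.isStemEmbedding_colim s A hs hA m)⟩

end Certificates

/-- Every infinite path `P = {Γ₁, Γ₂, …}` in covtree starting
at the root has a certificate: there is an infinite, countable, past-finite
order whose set of `n`-stems equals `Γₙ` for every `n`. -/
theorem path_has_certificate (P : CovPath) :
    ∃ (α : Type) (p : PartialOrder α), Countable α ∧ Infinite α ∧ PastFinite p ∧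
      ∀ n : ℕ, stems n p = P.node n := by
  choose α p _ hp hcert using fun m => (P.isNode m).2
  obtain ⟨s, A, hs, hA, hfreq, hexh⟩ := exists_frequent_chain hp hcert
  exact ⟨ℕ, StemChain.colim s A hs hA, inferInstance, inferInstance,
    StemChain.pastFinite_colim s A hs hA,
    stems_colim_eq_node hp hcert hA hfreq hexh⟩
end

section
/- The stem-set σ-algebra and the certificate-set σ-algebra on the space of infinite orders coincide: R(S) = R(Σ). Specifically, (a) for any n-order B, stem(B) = ⋃ᵢ cert(Γₙⁱ) where the union ranges over all covtree nodes Γₙⁱ at level n containing B; (b) for any node Γₙ = {A¹,…,Aᵏ} with complement Ω(n)∖Γₙ = {B¹,…,Bˡ}, cert(Γₙ) = ⋂ᵢ stem(Aⁱ) ∖ ⋃ⱼ stem(Bʲ). -/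
/-- A naturally labeled infinite causet: a partial order on `ℕ` in which
`i ≺ j` implies `i < j` (hence past-finite). -/
def NatCauset := {p : PartialOrder ℕ // ∀ i j : ℕ, p.lt i j → i < j}

instance natSetoid : Setoid NatCauset where
  r p q := Nonempty (p.val.le ≃r q.val.le)
  iseqv := by
    refine ⟨fun p => ⟨RelIso.refl _⟩, ?_, ?_⟩
    · rintro p q ⟨e⟩; exact ⟨e.symm⟩
    · rintro p q r ⟨e⟩ ⟨f⟩; exact ⟨e.trans f⟩

/-- The space `Ω` of infinite orders: isomorphism classes of countable
past-finite infinite causets. -/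
def InfOrd := Quotient natSetoid

/-- The set of `n`-stems of an infinite order. -/
def Nstems (n : ℕ) (C : InfOrd) : Set (NOrder n) :=
  {B | ∃ c : NatCauset, ⟦c⟧ = C ∧ QStemIn B c.val}

/-- The stem set of an `n`-order `B`: the set of infinite orders containing `B`
as a stem. -/
def stemSet {n : ℕ} (B : NOrder n) : Set InfOrd :=
  {C | B ∈ Nstems n C}

/-- The certificate set of a set `Γ` of `n`-orders: the set of infinite orders
whose set of `n`-stems is exactly `Γ`. -/
def certSet {n : ℕ} (Γ : Set (NOrder n)) : Set InfOrd :=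
  {C | Nstems n C = Γ}

/-- The rogue equivalence relation: two infinite orders are equivalent iff they
have the same `n`-stems for every `n`. -/
instance rogueSetoid : Setoid InfOrd where
  r A B := ∀ n, Nstems n A = Nstems n B
  iseqv := by
    refine ⟨fun A n => rfl, ?_, ?_⟩
    · intro A B h n; exact (h n).symm
    · intro A B C h h' n; exact (h n).trans (h' n)

/-- The quotient `Ω/∼_R` of infinite orders by the rogue equivalence. -/
def RQuot := Quotient rogueSetoid

open scoped Classical in
/-- The distance between two infinite orders: `2⁻ⁿ` where `n` is the largest
integer such that the two orders have the same set of `n`-stems, and `0` if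
they have the same stems of every cardinality. -/
noncomputable def preDist (A B : InfOrd) : ℝ :=
  if ∀ n, Nstems n A = Nstems n B then 0
  else (2 : ℝ)⁻¹ ^ sSup {k : ℕ | Nstems k A = Nstems k B}

/-- The induced metric on the quotient `Ω/∼_R`. -/
noncomputable def rdist : RQuot → RQuot → ℝ :=
  Quotient.lift₂ preDist (by
    intro a b a' b' ha hb
    have h : ∀ k, (Nstems k a = Nstems k b) ↔ (Nstems k a' = Nstems k b') := by
      intro k; rw [ha k, hb k]
    unfold preDist
    by_cases hall : ∀ n, Nstems n a = Nstems n b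
    · rw [if_pos hall, if_pos (fun n => (h n).mp (hall n))]
    · rw [if_neg hall, if_neg (fun hc => hall (fun n => (h n).mpr (hc n)))]
      congr 1
      apply congrArg
      ext k
      exact h k)

/-- The image of a certificate set in the quotient `Ω/∼_R`. -/
def certR {n : ℕ} (Γ : Set (NOrder n)) : Set RQuot :=
  (fun C : InfOrd => (⟦C⟧ : RQuot)) '' certSet Γ

/-- The diameter of a subset of `Ω/∼_R`: the supremum of distances between its
points. -/
noncomputable def rdiam (S : Set RQuot) : ℝ :=
  sSup {r : ℝ | ∃ x ∈ S, ∃ y ∈ S, rdist x y = r}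


/-! `stem(B)` and `cert(Γ)` are the preimages of `{Γ | B ∈ Γ}` and `{Γ}` under `C ↦ Nstems n C`,
so (a) and (b) are identities about the fibres of any map into a power set; for (a) one only
needs that each `Nstems n C` containing `B` is a covtree node, certified by a representative of
`C`. There are finitely many `n`-orders, so these unions and intersections are countable, and each
generating family is measurable for the σ-algebra generated by the other. -/

namespace Set

variable {α β : Type*}

theorem setOf_mem_eq_biUnion_setOf_eq {F : α → Set β} {P : Set β → Prop} {b : β}
    (hP : ∀ x, b ∈ F x → P (F x)) :
    {x | b ∈ F x} = ⋃ Γ ∈ {Γ : Set β | P Γ ∧ b ∈ Γ}, {x | F x = Γ} := by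
  ext x
  simp only [mem_ofPred_eq, mem_iUnion, exists_prop]
  exact ⟨fun hb => ⟨F x, ⟨hP x hb, hb⟩, rfl⟩, fun ⟨_, ⟨_, hb⟩, hx⟩ => hx ▸ hb⟩

theorem setOf_eq_eq_biInter_diff_biUnion (F : α → Set β) (Γ : Set β) :
    {x | F x = Γ} = (⋂ a ∈ Γ, {x | a ∈ F x}) \ ⋃ b ∈ Γᶜ, {x | b ∈ F x} := by
  ext x
  simp only [mem_ofPred_eq, mem_sdiff, mem_iInter, mem_iUnion, mem_compl_iff, exists_prop,
    not_exists, not_and, Set.ext_iff]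
  exact ⟨fun h => ⟨fun a => (h a).2, fun b hb hbF => hb ((h b).1 hbF)⟩,
    fun h a => ⟨fun haF => by_contra fun ha => h.2 a ha haF, h.1 a⟩⟩

end Set

theorem PartialOrder.lt_iff_of_relIso {α β : Type*} {p : PartialOrder α} {q : PartialOrder β}
    (e : p.le ≃r q.le) (a b : α) : p.lt a b ↔ q.lt (e a) (e b) := by
  rw [p.lt_iff_le_not_ge, q.lt_iff_le_not_ge, e.map_rel_iff, e.map_rel_iff]

theorem StemIn.of_relIso {n : ℕ} {α β : Type*} {b : FinOrd n} {p : PartialOrder α}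
    {q : PartialOrder β} (e : p.le ≃r q.le) (h : StemIn b p) : StemIn b q := by
  obtain ⟨f, hf, hle, hdown⟩ := h
  refine ⟨e ∘ f, e.injective.comp hf, fun i j => (hle i j).trans e.map_rel_iff.symm, ?_⟩
  intro i y hy
  rw [← e.apply_symm_apply y] at hy
  obtain ⟨j, hj⟩ := hdown i _ ((PartialOrder.lt_iff_of_relIso e _ _).2 hy)
  exact ⟨j, by simp [hj]⟩

theorem QStemIn.of_relIso {n : ℕ} {α β : Type*} {B : NOrder n} {p : PartialOrder α}
    {q : PartialOrder β} (e : p.le ≃r q.le) : QStemIn B p → QStemIn B q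
  | ⟨b, hb, hs⟩ => ⟨b, hb, hs.of_relIso e⟩

instance inst_s13 (n : ℕ) : Finite (FinOrd n) :=
  Finite.of_injective (fun p : FinOrd n => p.le) fun p q h =>
    PartialOrder.ext fun _ _ => by rw [show p.le = q.le from h]

instance inst_s13_2 (n : ℕ) : Finite (NOrder n) :=
  Quotient.finite _

theorem NatCauset.pastFinite (c : NatCauset) : PastFinite c.val :=
  fun x => (Set.finite_Iio x).subset fun y hy => c.prop y x hy

theorem stems_eq_nstems_mk (n : ℕ) (c : NatCauset) :
    stems n c.val = Nstems n (⟦c⟧ : InfOrd) := by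
  ext B
  refine ⟨fun hB => ⟨c, rfl, hB⟩, ?_⟩
  rintro ⟨c', hc', hB⟩
  exact hB.of_relIso (Classical.choice (Quotient.exact hc'))

theorem isNode_nstems {n : ℕ} {C : InfOrd} {B : NOrder n} (hB : B ∈ Nstems n C) :
    IsNode n (Nstems n C) := by
  induction C using Quotient.inductionOn with
  | h c => exact ⟨⟨B, hB⟩, ℕ, c.val, inferInstance, c.pastFinite, stems_eq_nstems_mk n c⟩

theorem stemSet_eq_biUnion_certSet {n : ℕ} (B : NOrder n) :
    stemSet B = ⋃ Γ ∈ {Γ : Set (NOrder n) | IsNode n Γ ∧ B ∈ Γ}, certSet Γ :=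
  Set.setOf_mem_eq_biUnion_setOf_eq fun _ => isNode_nstems

theorem certSet_eq_biInter_diff_biUnion {n : ℕ} (Γ : Set (NOrder n)) :
    certSet Γ = (⋂ A ∈ Γ, stemSet A) \ ⋃ B ∈ Γᶜ, stemSet B :=
  Set.setOf_eq_eq_biInter_diff_biUnion (Nstems n) Γ

section Measurability

open MeasureTheory

variable {m : MeasurableSpace InfOrd}

theorem measurableSet_stemSet_of_certSet
    (h : ∀ (n : ℕ) (Γ : Set (NOrder n)), IsNode n Γ → MeasurableSet[m] (certSet Γ))
    {n : ℕ} (B : NOrder n) : MeasurableSet[m] (stemSet B) := by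
  rw [stemSet_eq_biUnion_certSet]
  exact .biUnion (Set.to_countable _) fun Γ hΓ => h n Γ hΓ.1

theorem measurableSet_certSet_of_stemSet
    (h : ∀ (n : ℕ) (B : NOrder n), MeasurableSet[m] (stemSet B))
    {n : ℕ} (Γ : Set (NOrder n)) : MeasurableSet[m] (certSet Γ) := by
  rw [certSet_eq_biInter_diff_biUnion]
  exact .diff (.biInter (Set.to_countable _) fun A _ => h n A)
    (.biUnion (Set.to_countable _) fun B _ => h n B)

end Measurability

/-- The stem-set σ-algebra and the certificate-set σ-algebra
on the space of infinite orders coincide: `R(S) = R(Σ)`.  Specifically,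
(a) for any `n`-order `B`, `stem(B)` is the union of `cert(Γ)` over all
covtree nodes `Γ` at level `n` containing `B`; (b) for any covtree node `Γ` at
level `n`, `cert(Γ) = ⋂_{A ∈ Γ} stem(A) ∖ ⋃_{B ∉ Γ} stem(B)`; and the
σ-algebras generated by the stem sets and by the certificate sets (with `∅`)
are equal. -/
theorem stem_algebra_eq_cert_algebra :
    (∀ (n : ℕ) (B : NOrder n),
      stemSet B = ⋃ Γ ∈ {Γ : Set (NOrder n) | IsNode n Γ ∧ B ∈ Γ}, certSet Γ) ∧
    (∀ (n : ℕ) (Γ : Set (NOrder n)), IsNode n Γ →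
      certSet Γ = (⋂ A ∈ Γ, stemSet A) \ ⋃ B ∈ Γᶜ, stemSet B) ∧
    MeasurableSpace.generateFrom {s : Set InfOrd | ∃ (n : ℕ) (B : NOrder n), s = stemSet B}
      = MeasurableSpace.generateFrom
          {s : Set InfOrd | s = ∅ ∨
            ∃ (n : ℕ) (Γ : Set (NOrder n)), IsNode n Γ ∧ s = certSet Γ} := by
  refine ⟨fun _ => stemSet_eq_biUnion_certSet, fun _ Γ _ => certSet_eq_biInter_diff_biUnion Γ,
    le_antisymm ?_ ?_⟩
  · refine MeasurableSpace.generateFrom_le ?_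
    rintro _ ⟨n, B, rfl⟩
    refine measurableSet_stemSet_of_certSet (fun n Γ hΓ => ?_) B
    exact MeasurableSpace.measurableSet_generateFrom (Or.inr ⟨n, Γ, hΓ, rfl⟩)
  · refine MeasurableSpace.generateFrom_le ?_
    rintro _ (rfl | ⟨n, Γ, -, rfl⟩)
    · exact MeasurableSpace.measurableSet_empty _
    · refine measurableSet_certSet_of_stemSet (fun n B => ?_) Γ
      exact MeasurableSpace.measurableSet_generateFrom ⟨n, B, rfl⟩
end
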